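/- Pigeonhole fixing via row swap: let m ≥ 1 and n ≥ 2, and let ω be the substitution with ω(p_{1,1}) = ⊥, ω(p_{2,1}) = ⊤, ω(p_{1,j}) = p_{2,j} and ω(p_{2,j}) = p_{1,j} for j ≥ 2, and ω fixing all other variables. Then every truth assignment τ satisfying PHP(m, n) with τ(p_{1,1}) = true yields a composed assignment τ∘ω that satisfies PHP(m, n) and sets p_{1,1} to false; in particular, PHP(m, n) is satisfiable if and only if PHP(m, n) ∧ {¬p_{1,1}} is satisfiable. -/
import Mathlib


variable {α : Type*} [DecidableEq α]

/-- `neg` is a negation operation on literals: an involution with no fixed points. -/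
def IsNegation (neg : α → α) : Prop :=
  (∀ ℓ, neg (neg ℓ) = ℓ) ∧ (∀ ℓ, neg ℓ ≠ ℓ)

/-- A truth assignment maps literals to Booleans, consistently with negation. -/
def IsAssignment (neg : α → α) (τ : α → Bool) : Prop :=
  ∀ ℓ, τ (neg ℓ) = !(τ ℓ)

/-- An assignment satisfies a clause if it sets some literal of the clause to true. -/
def SatClause (τ : α → Bool) (C : Finset α) : Prop :=
  ∃ ℓ ∈ C, τ ℓ = true

/-- An assignment satisfies a CNF formula if it satisfies every clause. -/
def SatFormula (τ : α → Bool) (F : Finset (Finset α)) : Prop :=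
  ∀ C ∈ F, SatClause τ C

/-- A syntactic symmetry of `F`: a permutation of the literals whose clause-wise
image maps `F` to itself and which commutes with negation. -/
def IsSymmetry (neg : α → α) (F : Finset (Finset α)) (σ : Equiv.Perm α) : Prop :=
  (F.image fun C => C.image fun ℓ => σ ℓ) = F ∧ ∀ ℓ, σ (neg ℓ) = neg (σ ℓ)

/-- `C` is a unique literal clause of `F`: no literal of `C` occurs in any clause
of `F \ {C}`. -/
def IsULC (F : Finset (Finset α)) (C : Finset α) : Prop :=
  ∀ D ∈ F, D ≠ C → ∀ ℓ ∈ C, ℓ ∉ D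

/-- An `n × m` matrix of literals exhibits row symmetry in `F`. -/
def HasRowSymmetry (neg : α → α) (F : Finset (Finset α)) {n m : ℕ}
    (M : Fin n → Fin m → α) : Prop :=
  ∀ i₁ i₂ : Fin n, ∃ σ : Equiv.Perm α, IsSymmetry neg F σ ∧
    (∀ j, σ (M i₁ j) = M i₂ j) ∧ (∀ j, σ (M i₂ j) = M i₁ j) ∧
    (∀ i j, i ≠ i₁ → i ≠ i₂ → σ (M i j) = M i j)

/-- A literal of the pigeonhole encoding: a variable `(hole, pigeon)` together with
a polarity (`true` = positive). -/
abbrev PLit (n m : ℕ) := (Fin n × Fin m) × Bool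

/-- Negation of pigeonhole literals: flip the polarity. -/
def pneg {n m : ℕ} : PLit n m → PLit n m := fun l => (l.1, !l.2)

/-- The pigeonhole formula PHP(m, n) with m pigeons and n holes. -/
def PHP (n m : ℕ) : Finset (Finset (PLit n m)) :=
  (Finset.univ.image fun j : Fin m =>
    Finset.univ.image fun i : Fin n => (((i, j) : Fin n × Fin m), true)) ∪
  ((Finset.univ.filter fun t : Fin n × Fin m × Fin m => t.2.1 < t.2.2).image
    fun t => ({((t.1, t.2.1), false), ((t.1, t.2.2), false)} : Finset (PLit n m)))

/-- The composed assignment τ∘ω for a substitution ω. -/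
def compAssign {β : Type*} (τ : β → Bool) (ω : β → β ⊕ Bool) : β → Bool := fun ℓ =>
  match ω ℓ with
  | Sum.inl ℓ' => τ ℓ'
  | Sum.inr b => b

/-- The substitution ω with ω(p_{1,1}) = ⊥, ω(p_{2,1}) = ⊤, swapping p_{1,j} and
p_{2,j} for pigeons j ≥ 2, and fixing all other variables (holes 1, 2 are the
0-based hole indices 0, 1; pigeon 1 is the 0-based pigeon index 0). -/
def rowSwapSub (n m : ℕ) : PLit (n+2) (m+1) → PLit (n+2) (m+1) ⊕ Bool := fun l =>
  if l.1.2 = 0 then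
    if l.1.1 = 0 then Sum.inr (!l.2)
    else if l.1.1 = 1 then Sum.inr l.2
    else Sum.inl l
  else
    if l.1.1 = 0 then Sum.inl ((1, l.1.2), l.2)
    else if l.1.1 = 1 then Sum.inl ((0, l.1.2), l.2)
    else Sum.inl l


section Aux

lemma amo_mem {n m : ℕ} (i : Fin n) {j k : Fin m} (h : j < k) :
    ({((i, j), false), ((i, k), false)} : Finset (PLit n m)) ∈ PHP n m := by
  apply Finset.mem_union_right
  exact Finset.mem_image.mpr ⟨(i, j, k), Finset.mem_filter.mpr ⟨Finset.mem_univ _, h⟩, rfl⟩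

lemma alo_mem {n m : ℕ} (j : Fin m) :
    (Finset.univ.image fun i : Fin n => (((i, j) : Fin n × Fin m), true)) ∈ PHP n m :=
  Finset.mem_union_left _ (Finset.mem_image.mpr ⟨j, Finset.mem_univ _, rfl⟩)

lemma php_mem {n m : ℕ} {C : Finset (PLit n m)} (hC : C ∈ PHP n m) :
    (∃ j : Fin m, C = Finset.univ.image fun i : Fin n => (((i, j) : Fin n × Fin m), true)) ∨
    (∃ i : Fin n, ∃ j k : Fin m, j < k ∧ C = {((i, j), false), ((i, k), false)}) := by
  rcases Finset.mem_union.mp hC with h | h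
  · obtain ⟨j, _, rfl⟩ := Finset.mem_image.mp h
    exact Or.inl ⟨j, rfl⟩
  · obtain ⟨t, ht, rfl⟩ := Finset.mem_image.mp h
    exact Or.inr ⟨t.1, t.2.1, t.2.2, (Finset.mem_filter.mp ht).2, rfl⟩

lemma neg_true {n m : ℕ} {τ : PLit n m → Bool} (hτ : IsAssignment pneg τ)
    (v : Fin n × Fin m) : τ (v, false) = !(τ (v, true)) := by
  have := hτ (v, true)
  simpa [pneg] using this

lemma sat_pair {n m : ℕ} {τ : PLit n m → Bool} {a b : PLit n m}
    (h : SatClause τ ({a, b} : Finset (PLit n m))) : τ a = true ∨ τ b = true := by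
  obtain ⟨ℓ, hmem, hval⟩ := h
  rcases Finset.mem_insert.mp hmem with rfl | hmem
  · exact Or.inl hval
  · exact Or.inr (Finset.mem_singleton.mp hmem ▸ hval)

lemma sat_alo {n m : ℕ} {τ : PLit n m → Bool} {j : Fin m}
    (h : SatClause τ (Finset.univ.image fun i : Fin n => (((i, j) : Fin n × Fin m), true))) :
    ∃ i : Fin n, τ ((i, j), true) = true := by
  obtain ⟨ℓ, hmem, hval⟩ := h
  obtain ⟨i, _, rfl⟩ := Finset.mem_image.mp hmem
  exact ⟨i, hval⟩

variable {n m : ℕ} (τ : PLit (n+2) (m+1) → Bool)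

lemma ca_00 (b : Bool) : compAssign τ (rowSwapSub n m) ((0, 0), b) = !b := by
  simp [compAssign, rowSwapSub]

lemma ca_10 (b : Bool) : compAssign τ (rowSwapSub n m) ((1, 0), b) = b := by
  simp [compAssign, rowSwapSub]

lemma ca_i0 {i : Fin (n+2)} (hi0 : i ≠ 0) (hi1 : i ≠ 1) (b : Bool) :
    compAssign τ (rowSwapSub n m) ((i, 0), b) = τ ((i, 0), b) := by
  simp [compAssign, rowSwapSub, hi0, hi1]

lemma ca_0j {j : Fin (m+1)} (hj : j ≠ 0) (b : Bool) :
    compAssign τ (rowSwapSub n m) ((0, j), b) = τ ((1, j), b) := by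
  simp [compAssign, rowSwapSub, hj]

lemma ca_1j {j : Fin (m+1)} (hj : j ≠ 0) (b : Bool) :
    compAssign τ (rowSwapSub n m) ((1, j), b) = τ ((0, j), b) := by
  simp [compAssign, rowSwapSub, hj]

lemma ca_ij {i : Fin (n+2)} {j : Fin (m+1)} (hi0 : i ≠ 0) (hi1 : i ≠ 1) (b : Bool) :
    compAssign τ (rowSwapSub n m) ((i, j), b) = τ ((i, j), b) := by
  by_cases hj : j = 0
  · subst hj; exact ca_i0 τ hi0 hi1 b
  · simp [compAssign, rowSwapSub, hj, hi0, hi1]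

lemma ca_assign (hτ : IsAssignment pneg τ) :
    IsAssignment pneg (compAssign τ (rowSwapSub n m)) := by
  rintro ⟨⟨i, j⟩, b⟩
  show compAssign τ (rowSwapSub n m) ((i, j), !b) = !(compAssign τ (rowSwapSub n m) ((i, j), b))
  by_cases hj : j = 0
  · subst hj
    by_cases hi0 : i = 0
    · subst hi0; rw [ca_00, ca_00]
    by_cases hi1 : i = 1
    · subst hi1; rw [ca_10, ca_10]
    · rw [ca_i0 τ hi0 hi1, ca_i0 τ hi0 hi1]
      simpa [pneg] using hτ ((i, 0), b)
  · by_cases hi0 : i = 0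
    · subst hi0
      rw [ca_0j τ hj, ca_0j τ hj]
      simpa [pneg] using hτ ((1, j), b)
    by_cases hi1 : i = 1
    · subst hi1
      rw [ca_1j τ hj, ca_1j τ hj]
      simpa [pneg] using hτ ((0, j), b)
    · rw [ca_ij τ hi0 hi1, ca_ij τ hi0 hi1]
      simpa [pneg] using hτ ((i, j), b)

lemma ca_sat (hτ : IsAssignment pneg τ)
    (hF : SatFormula τ (PHP (n+2) (m+1))) (h1 : τ ((0, 0), true) = true) :
    SatFormula (compAssign τ (rowSwapSub n m)) (PHP (n+2) (m+1)) := by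
  set τ' := compAssign τ (rowSwapSub n m) with hτ'
  -- key fact: τ ((0, j), false) = true for j ≠ 0
  have key : ∀ j : Fin (m+1), j ≠ 0 → τ ((0, j), false) = true := by
    intro j hj
    have hlt : (0 : Fin (m+1)) < j := Fin.pos_of_ne_zero hj
    have := sat_pair (hF _ (amo_mem 0 hlt))
    rcases this with h | h
    · rw [neg_true hτ, h1] at h; simp at h
    · exact h
  intro C hC
  rcases php_mem hC with ⟨j, rfl⟩ | ⟨i, j, k, hjk, rfl⟩
  · -- ALO clause for pigeon j
    by_cases hj : j = 0
    · subst hj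
      exact ⟨((1, 0), true), Finset.mem_image.mpr ⟨1, Finset.mem_univ _, rfl⟩, ca_10 τ true⟩
    · obtain ⟨i, hi⟩ := sat_alo (hF _ (alo_mem j))
      have hi0 : i ≠ 0 := by
        rintro rfl
        have := neg_true hτ (0, j)
        rw [key j hj] at this
        simp [hi] at this
      by_cases hi1 : i = 1
      · subst hi1
        exact ⟨((0, j), true), Finset.mem_image.mpr ⟨0, Finset.mem_univ _, rfl⟩,
          (ca_0j τ hj true).trans hi⟩
      · exact ⟨((i, j), true), Finset.mem_image.mpr ⟨i, Finset.mem_univ _, rfl⟩,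
          (ca_ij τ hi0 hi1 true).trans hi⟩
  · -- AMO clause for hole i, pigeons j < k
    have hk : k ≠ 0 := by
      rintro rfl
      exact absurd hjk (by simp [Fin.not_lt, Fin.zero_le])
    have memj : ((i, j), false) ∈ ({((i, j), false), ((i, k), false)} :
        Finset (PLit (n+2) (m+1))) := Finset.mem_insert_self _ _
    have memk : ((i, k), false) ∈ ({((i, j), false), ((i, k), false)} :
        Finset (PLit (n+2) (m+1))) := Finset.mem_insert_of_mem (Finset.mem_singleton_self _)
    by_cases hi0 : i = 0
    · subst hi0
      by_cases hj : j = 0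
      · subst hj
        exact ⟨_, memj, by simpa using ca_00 τ false⟩
      · rcases sat_pair (hF _ (amo_mem 1 hjk)) with h | h
        · exact ⟨_, memj, (ca_0j τ hj false).trans h⟩
        · exact ⟨_, memk, (ca_0j τ hk false).trans h⟩
    by_cases hi1 : i = 1
    · subst hi1
      by_cases hj : j = 0
      · subst hj
        exact ⟨_, memk, (ca_1j τ hk false).trans (key k hk)⟩
      · exact ⟨_, memj, (ca_1j τ hj false).trans (key j hj)⟩
    · rcases sat_pair (hF _ (amo_mem i hjk)) with h | h
      · exact ⟨_, memj, (ca_ij τ hi0 hi1 false).trans h⟩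
      · exact ⟨_, memk, (ca_ij τ hi0 hi1 false).trans h⟩

end Aux

/-- Pigeonhole fixing via row swap (stated for all n ≥ 2 holes and
m ≥ 1 pigeons): every assignment τ satisfying PHP with τ(p_{1,1}) = true yields a
composed assignment τ∘ω satisfying PHP and setting p_{1,1} to false; in particular
PHP and PHP ∧ {¬p_{1,1}} are equisatisfiable. -/
theorem php_row_swap_fixing (n m : ℕ) :
    (∀ τ : PLit (n+2) (m+1) → Bool, IsAssignment pneg τ →
      SatFormula τ (PHP (n+2) (m+1)) → τ ((0, 0), true) = true →
        SatFormula (compAssign τ (rowSwapSub n m)) (PHP (n+2) (m+1)) ∧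
        compAssign τ (rowSwapSub n m) ((0, 0), true) = false) ∧
    ((∃ τ, IsAssignment pneg τ ∧ SatFormula τ (PHP (n+2) (m+1))) ↔
      (∃ τ, IsAssignment pneg τ ∧
        SatFormula τ (insert ({((0, 0), false)} : Finset (PLit (n+2) (m+1)))
          (PHP (n+2) (m+1))))) := by
  constructor
  · intro τ hτ hF h1
    exact ⟨ca_sat τ hτ hF h1, by simpa using ca_00 τ true⟩
  · constructor
    · rintro ⟨τ, hτ, hF⟩
      by_cases h1 : τ ((0, 0), true) = true
      · refine ⟨compAssign τ (rowSwapSub n m), ca_assign τ hτ, ?_⟩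
        intro C hC
        rcases Finset.mem_insert.mp hC with rfl | hC
        · exact ⟨((0, 0), false), Finset.mem_singleton_self _, by simpa using ca_00 τ false⟩
        · exact ca_sat τ hτ hF h1 C hC
      · refine ⟨τ, hτ, ?_⟩
        intro C hC
        rcases Finset.mem_insert.mp hC with rfl | hC
        · refine ⟨((0, 0), false), Finset.mem_singleton_self _, ?_⟩
          rw [neg_true hτ, Bool.eq_false_iff.mpr h1]; rfl
        · exact hF C hC
    · rintro ⟨τ, hτ, hF⟩
      exact ⟨τ, hτ, fun C hC => hF C (Finset.mem_insert_of_mem hC)⟩
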